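/- arXiv:0903.0411 — 5 statements merged into one kernel-verified Lean document; each statement's English description precedes it below -/
import Mathlib

section
/- Let p be a prime and let μ = (μ_1, …, μ_m) be a composition of n = dp + r (0 ≤ r < p), with μ_i = u_i p + s_i where 0 ≤ s_i < p. The number of ordered set-partitions (A_1, …, A_m) of {1, …, n} with |A_i| = μ_i such that each block I_j = {(j-1)p+1, …, jp} for 1 ≤ j ≤ s is contained in some A_i, equals ∑_{(c_1,…,c_m)} [s! / ∏ c_i!] · [((d-s)p + r)! / ∏ (μ_i - c_i p)!], where the sum runs over tuples of nonnegative integers with c_i ≤ u_i for all i and ∑ c_i = s. -/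
/-
Write `n = s p + t`. Collapsing each of the first `s` blocks of `p` consecutive points to a single
point, a map `Fin n → Fin m` that is constant on those blocks is the same as a pair of maps
`g : Fin s → Fin m`, `h : Fin t → Fin m`, and its fibre over `i` has `c_i p + |h⁻¹ i|` points, where
`c_i = |g⁻¹ i|`. Sorting the pairs by the type `c` of `g` gives the sum over `c`, with `c_i ≤ u_i`
being exactly `c_i p ≤ μ_i`. Finally, the maps `α → ι` with prescribed fibre sizes `k` form one
orbit of `Perm α` acting by precomposition, with stabiliser `∏ i, Perm (fibre i)`, so there are
`(∑ k)! / ∏ (k i)!` of them.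
-/

open Finset Function Equiv
open scoped Nat

variable {α β ι : Type*}

noncomputable def fiberCard (f : α → ι) (i : ι) : ℕ := Nat.card {x // f x = i}

lemma fiberCard_comp_equiv (f : α → ι) (e : β ≃ α) : fiberCard (f ∘ e) = fiberCard f :=
  funext fun _ => Nat.card_congr (e.subtypeEquiv fun _ => Iff.rfl)

lemma fiberCard_sumElim [Finite α] [Finite β] (f : α → ι) (g : β → ι) (i : ι) :
    fiberCard (Sum.elim f g) i = fiberCard f i + fiberCard g i := by
  rw [fiberCard, Nat.card_congr subtypeSum, Nat.card_sum]
  rfl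

lemma fiberCard_comp_fst [Finite α] [Finite β] (f : α → ι) (i : ι) :
    fiberCard (f ∘ Prod.fst : α × β → ι) i = fiberCard f i * Nat.card β := by
  change Nat.card {x : α × β // f x.1 = i} = _
  rw [Nat.card_congr (prodSubtypeFstEquivSubtypeProd (p := (f · = i))), Nat.card_prod]
  rfl

lemma sum_fiberCard [Finite α] [Fintype ι] (f : α → ι) : ∑ i, fiberCard f i = Nat.card α := by
  rw [← Nat.card_congr (sigmaFiberEquiv f), Nat.card_sigma]
  rfl

lemma fiberCard_eq_iff_exists_perm [Finite α] {f g : α → ι} :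
    fiberCard f = fiberCard g ↔ ∃ σ : Perm α, f ∘ σ = g := by
  constructor
  · intro h
    have e : ∀ i, {x // g x = i} ≃ {x // f x = i} := fun i =>
      (Finite.card_eq.mp (congrFun h i).symm).some
    exact ⟨ofFiberEquiv e, funext (ofFiberEquiv_map e)⟩
  · rintro ⟨σ, rfl⟩
    exact (fiberCard_comp_equiv f σ).symm

lemma exists_fiberCard_eq [Finite α] [Fintype ι] (k : ι → ℕ) (hk : ∑ i, k i = Nat.card α) :
    ∃ f : α → ι, fiberCard f = k := by
  obtain ⟨e⟩ : Nonempty (α ≃ Σ i, Fin (k i)) := Finite.card_eq.mp (by simp [hk])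
  refine ⟨Sigma.fst ∘ e, ?_⟩
  rw [fiberCard_comp_equiv]
  exact funext fun i => by simp [fiberCard, Nat.card_congr (sigmaSubtype i)]

lemma card_comp_perm_eq_card_stabilizer [Finite α] {f₀ f : α → ι}
    (hf : fiberCard f = fiberCard f₀) :
    Nat.card {σ : Perm α // f₀ ∘ σ = f} = Nat.card {σ : Perm α // f₀ ∘ σ = f₀} := by
  obtain ⟨τ, rfl⟩ := fiberCard_eq_iff_exists_perm.mp hf.symm
  refine Nat.card_congr (subtypeEquiv (Equiv.mulRight τ⁻¹) fun σ => ?_)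
  simp only [coe_mulRight, Perm.coe_mul, Perm.coe_inv]
  rw [← comp_assoc, comp_symm_eq]

theorem card_fiberCard_eq_multinomial [Fintype α] [Fintype ι] (k : ι → ℕ)
    (hk : ∑ i, k i = Nat.card α) :
    Nat.card {f : α → ι // fiberCard f = k} = Nat.multinomial univ k := by
  classical
  obtain ⟨f₀, hf₀⟩ := exists_fiberCard_eq k hk
  have hstab : Nat.card {σ : Perm α // f₀ ∘ σ = f₀} = ∏ i, (k i)! := by
    rw [Nat.card_eq_fintype_card, DomMulAct.stabilizer_card, ← hf₀]
    simp only [fiberCard, Nat.card_eq_fintype_card]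
  have hcount : Nat.card {f : α → ι // fiberCard f = k} * ∏ i, (k i)!
      = (Nat.card α)! := by
    let act : Perm α → {f : α → ι // fiberCard f = k} := fun σ =>
      ⟨f₀ ∘ σ, (fiberCard_comp_equiv f₀ σ).trans hf₀⟩
    have hfiber (f : {f : α → ι // fiberCard f = k}) :
        Nat.card {σ // act σ = f} = ∏ i, (k i)! := by
      rw [← hstab, ← card_comp_perm_eq_card_stabilizer (f.2.trans hf₀.symm)]
      exact Nat.card_congr (subtypeEquivRight fun σ => Subtype.ext_iff)
    rw [← Nat.card_perm, ← Nat.card_congr (sigmaFiberEquiv act), Nat.card_sigma,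
      Finset.sum_congr rfl fun f _ => hfiber f, Finset.sum_const, Finset.card_univ,
      ← Nat.card_eq_fintype_card, smul_eq_mul]
  apply Nat.eq_of_mul_eq_mul_left (Finset.prod_pos fun i _ => Nat.factorial_pos _)
  rw [Nat.multinomial_spec, hk, mul_comm, hcount]

lemma Nat.card_subtype_and_mem_range {X Y : Type*} {Φ : X → Y} (hΦ : Injective Φ)
    (q : Y → Prop) : Nat.card {y // q y ∧ y ∈ Set.range Φ} = Nat.card {x // q (Φ x)} :=
  Nat.card_congr <| (subtypeEquivRight fun _ => and_comm).trans <|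
    (subtypeSubtypeEquivSubtypeInter _ q).symm.trans
      ((ofInjective Φ hΦ).subtypeEquiv fun _ => Iff.rfl).symm

def blockEquiv (s p t : ℕ) : Fin s × Fin p ⊕ Fin t ≃ Fin (s * p + t) :=
  (finProdFinEquiv.sumCongr (Equiv.refl _)).trans finSumFinEquiv

section Blocks

variable {s p t : ℕ}

lemma blockEquiv_inl_val (j : Fin s) (l : Fin p) :
    (blockEquiv s p t (.inl (j, l)) : ℕ) = j * p + l := by
  simp [blockEquiv, mul_comm, add_comm]

lemma blockEquiv_symm_of_lt (x : Fin (s * p + t)) (hx : (x : ℕ) < s * p) :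
    (blockEquiv s p t).symm x =
      .inl (⟨x / p, Nat.div_lt_of_lt_mul (hx.trans_eq (mul_comm s p))⟩,
        ⟨x % p, Nat.mod_lt _ (Nat.pos_of_ne_zero (by rintro rfl; simp at hx))⟩) := by
  rw [symm_apply_eq]
  ext
  simp [blockEquiv, Nat.mod_add_div]

noncomputable def blockLift (p : ℕ) (g : Fin s → ι) (h : Fin t → ι) : Fin (s * p + t) → ι :=
  Sum.elim (g ∘ Prod.fst) h ∘ (blockEquiv s p t).symm

lemma blockLift_blockEquiv (g : Fin s → ι) (h : Fin t → ι) (y : Fin s × Fin p ⊕ Fin t) :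
    blockLift p g h (blockEquiv s p t y) = Sum.elim (g ∘ Prod.fst) h y := by
  rw [blockLift, comp_apply, symm_apply_apply]

lemma blockLift_of_lt (g : Fin s → ι) (h : Fin t → ι) (x : Fin (s * p + t))
    (hx : (x : ℕ) < s * p) :
    blockLift p g h x = g ⟨x / p, Nat.div_lt_of_lt_mul (hx.trans_eq (mul_comm s p))⟩ := by
  rw [blockLift, comp_apply, blockEquiv_symm_of_lt x hx]
  rfl

lemma fiberCard_blockLift (g : Fin s → ι) (h : Fin t → ι) (i : ι) :
    fiberCard (blockLift p g h) i = fiberCard g i * p + fiberCard h i := by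
  rw [blockLift, fiberCard_comp_equiv, fiberCard_sumElim, fiberCard_comp_fst, Nat.card_fin]

lemma blockLift_injective (hp : 0 < p) :
    Injective (uncurry (blockLift (ι := ι) (s := s) (t := t) p)) := by
  have : Nonempty (Fin p) := ⟨⟨0, hp⟩⟩
  rintro ⟨g, h⟩ ⟨g', h'⟩ hgh
  have hsum : Sum.elim (g ∘ Prod.fst) h = Sum.elim (g' ∘ Prod.fst) h' :=
    (blockEquiv s p t).symm.surjective.injective_comp_right hgh
  have hg : g ∘ Prod.fst = g' ∘ (Prod.fst : Fin s × Fin p → Fin s) := by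
    simpa using congrArg (· ∘ Sum.inl) hsum
  have hh : h = h' := by simpa using congrArg (· ∘ Sum.inr) hsum
  rw [Prod.fst_surjective.injective_comp_right hg, hh]

lemma constOnBlocks_iff_mem_range_blockLift (hp : 0 < p) (f : Fin (s * p + t) → ι) :
    (∀ j, 1 ≤ j → j ≤ s →
      ∃ i, ∀ x : Fin (s * p + t), (j - 1) * p ≤ (x : ℕ) → (x : ℕ) < j * p → f x = i) ↔
    f ∈ Set.range (uncurry (blockLift p)) := by
  constructor
  · intro hf
    refine ⟨(fun j => f (blockEquiv s p t (.inl (j, ⟨0, hp⟩))),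
      fun k => f (blockEquiv s p t (.inr k))), funext fun x => ?_⟩
    obtain ⟨y, rfl⟩ := (blockEquiv s p t).surjective x
    rcases y with ⟨j, l⟩ | k
    · obtain ⟨i, hi⟩ := hf (j + 1) (by omega) j.2
      have hblock (l : Fin p) : f (blockEquiv s p t (.inl (j, l))) = i :=
        hi _ (by simp [blockEquiv_inl_val]) (by rw [blockEquiv_inl_val]; nlinarith [l.2])
      simp [uncurry, blockLift_blockEquiv, hblock]
    · simp [uncurry, blockLift_blockEquiv]
  · rintro ⟨⟨g, h⟩, rfl⟩ j hj1 hjs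
    refine ⟨g ⟨j - 1, by omega⟩, fun x hx1 hx2 => ?_⟩
    rw [uncurry_apply_pair, blockLift_of_lt g h x (hx2.trans_le (Nat.mul_le_mul_right p hjs))]
    congr
    exact Nat.div_eq_of_lt_le hx1 (by rwa [Nat.sub_add_cancel hj1])

lemma card_constOnBlocks_eq_card_pairs (hp : 0 < p) (μ : ι → ℕ) :
    Nat.card {f : Fin (s * p + t) → ι // (∀ i, Nat.card {x // f x = i} = μ i) ∧
        ∀ j, 1 ≤ j → j ≤ s →
          ∃ i, ∀ x : Fin (s * p + t), (j - 1) * p ≤ (x : ℕ) → (x : ℕ) < j * p → f x = i} =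
      Nat.card {gh : (Fin s → ι) × (Fin t → ι) //
        ∀ i, fiberCard gh.1 i * p + fiberCard gh.2 i = μ i} := by
  simp_rw [constOnBlocks_iff_mem_range_blockLift hp]
  rw [Nat.card_subtype_and_mem_range (blockLift_injective hp)]
  exact Nat.card_congr <| subtypeEquivRight fun gh =>
    forall_congr' fun i => by rw [← fiberCard_blockLift]; rfl

end Blocks

lemma card_pairs_eq_sum_card_mul_card {S T : Type*} [Finite S] [Finite T] [Finite ι] (p : ℕ)
    (μ : ι → ℕ) (C : Finset (ι → ℕ))
    (hC : ∀ g : S → ι, (∀ i, fiberCard g i * p ≤ μ i) → fiberCard g ∈ C)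
    (hCμ : ∀ c ∈ C, ∀ i, c i * p ≤ μ i) :
    Nat.card {gh : (S → ι) × (T → ι) // ∀ i, fiberCard gh.1 i * p + fiberCard gh.2 i = μ i} =
      ∑ c ∈ C, Nat.card {g : S → ι // fiberCard g = c} *
        Nat.card {h : T → ι // fiberCard h = fun i => μ i - c i * p} := by
  let e : {gh : (S → ι) × (T → ι) // ∀ i, fiberCard gh.1 i * p + fiberCard gh.2 i = μ i} ≃
      Σ c : C, {g : S → ι // fiberCard g = c} ×
        {h : T → ι // fiberCard h = fun i => μ i - c.1 i * p} :=
    { toFun gh := ⟨⟨fiberCard gh.1.1, hC _ fun i => (Nat.le_add_right _ _).trans_eq (gh.2 i)⟩,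
        ⟨gh.1.1, rfl⟩, ⟨gh.1.2, funext fun i => by simp [← gh.2 i]⟩⟩
      invFun x := ⟨(x.2.1.1, x.2.2.1), fun i => by
        rw [x.2.1.2, x.2.2.2]; exact Nat.add_sub_of_le (hCμ _ x.1.2 i)⟩
      left_inv _ := rfl
      right_inv := by rintro ⟨⟨c, hc⟩, ⟨g, hg : fiberCard g = c⟩, ⟨h, hh⟩⟩; subst hg; rfl }
  rw [Nat.card_congr e, Nat.card_sigma, ← Finset.sum_coe_sort C]
  simp only [Nat.card_prod]

theorem stmt_5_general (p : ℕ) (n d r s m : ℕ) (hn : n = d * p + r) (hr : r < p)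
    (hsd : s ≤ d) (μ u sres : Fin m → ℕ)
    (hμ : ∀ i, μ i = u i * p + sres i) (hsres : ∀ i, sres i < p)
    (hsum : ∑ i, μ i = n) :
    Nat.card {f : Fin n → Fin m //
        (∀ i, Nat.card {x : Fin n // f x = i} = μ i) ∧
        (∀ j, 1 ≤ j → j ≤ s →
          ∃ i, ∀ x : Fin n, (j - 1) * p ≤ (x : ℕ) → (x : ℕ) < j * p → f x = i)} =
      ∑ c ∈ (Fintype.piFinset fun _ : Fin m => Finset.range (s + 1)).filter
          (fun c => (∀ i, c i ≤ u i) ∧ ∑ i, c i = s),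
        Nat.multinomial Finset.univ c *
          Nat.multinomial Finset.univ (fun i => μ i - c i * p) := by
  have hp : 0 < p := by omega
  have hu (i : Fin m) (c : ℕ) : c ≤ u i ↔ c * p ≤ μ i := by
    rw [← Nat.le_div_iff_mul_le hp, hμ, add_comm, Nat.add_mul_div_right _ _ hp,
      Nat.div_eq_of_lt (hsres i), zero_add]
  obtain ⟨t, rfl⟩ : ∃ t, n = s * p + t :=
    ⟨n - s * p, by have := Nat.mul_le_mul_right p hsd; omega⟩
  rw [card_constOnBlocks_eq_card_pairs hp, card_pairs_eq_sum_card_mul_card p μ _ ?_ ?_]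
  · refine Finset.sum_congr rfl fun c hc => ?_
    obtain ⟨-, hcu, hcs⟩ := mem_filter.mp hc
    rw [card_fiberCard_eq_multinomial c (by simp [hcs]), card_fiberCard_eq_multinomial _ ?_]
    rw [sum_tsub_distrib _ fun i _ => (hu i _).1 (hcu i), hsum, ← sum_mul, hcs]
    simp
  · intro g hg
    have hsum_g : ∑ i, fiberCard g i = s := by simp [sum_fiberCard]
    simp only [mem_filter, Fintype.mem_piFinset, mem_range]
    exact ⟨fun i => Nat.lt_succ_of_le
      ((single_le_sum (f := fiberCard g) (fun _ _ => Nat.zero_le _) (mem_univ i)).trans_eq hsum_g),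
      fun i => (hu i _).2 (hg i), hsum_g⟩
  · intro c hc i
    exact (hu i _).1 ((mem_filter.mp hc).2.1 i)

/-- Counting ordered set-partitions of `{1, …, n}` of type `μ` in which each of the first `s`
blocks of `p` consecutive integers is contained in a single part. -/
theorem stmt_5 (p : ℕ) (hp : p.Prime) (n d r s m : ℕ) (hn : n = d * p + r) (hr : r < p)
    (hs1 : 1 ≤ s) (hsd : s ≤ d) (μ u sres : Fin m → ℕ)
    (hμ : ∀ i, μ i = u i * p + sres i) (hsres : ∀ i, sres i < p)
    (hsum : ∑ i, μ i = n) :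
    Nat.card {f : Fin n → Fin m //
        (∀ i, Nat.card {x : Fin n // f x = i} = μ i) ∧
        (∀ j, 1 ≤ j → j ≤ s →
          ∃ i, ∀ x : Fin n, (j - 1) * p ≤ (x : ℕ) → (x : ℕ) < j * p → f x = i)} =
      ∑ c ∈ (Fintype.piFinset fun _ : Fin m => Finset.range (s + 1)).filter
          (fun c => (∀ i, c i ≤ u i) ∧ ∑ i, c i = s),
        Nat.multinomial Finset.univ c *
          Nat.multinomial Finset.univ (fun i => μ i - c i * p) :=
  stmt_5_general p n d r s m hn hr hsd μ u sres hμ hsres hsum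
end

section
/- Let p be a prime and n = dp + r with 1 ≤ r ≤ p - 1 and d ≥ 1. Write b = vp + b_0 with 0 ≤ b_0 ≤ p - 1 and suppose a + b = n with a ≥ 1. If b_0 < r, then the number N(μ; d) = ∑_{(c_1,c_2)} C(d, c_2) · C(r-1, b - c_2 p), summed over pairs of nonnegative integers (c_1, c_2) with c_1 ≤ u, c_2 ≤ v, c_1 + c_2 = d (where a = up + a_0, 0 ≤ a_0 < p), equals C(d, v) · C(r-1, b_0), and this number is nonzero. -/
/-!
Since `b₀ < r < p` and `a₀ < p`, adding `a = up + a₀` and `b = vp + b₀` in base `p` produces no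
carry into the `p`-digit, so `u + v = d`. Hence `(u, v)` is the only admissible pair `(c₁, c₂)`,
the sum has the single term `C(d, v) C(r-1, b - vp) = C(d, v) C(r-1, b₀)`, and both factors are
positive because `v ≤ d` and `b₀ ≤ r - 1`.
-/

open Finset

theorem add_eq_of_add_digits_eq {p u v d a₀ b₀ r : ℕ}
    (h : u * p + a₀ + (v * p + b₀) = d * p + r)
    (ha₀ : a₀ < p) (hb₀ : b₀ < r) (hr : r < p) : u + v = d := by
  have upper : (u + v) * p < (d + 1) * p := by linarith [add_mul u v p, add_mul d 1 p]
  have lower : d * p < (u + v + 1) * p := by linarith [add_mul u v p, add_mul (u + v) 1 p]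
  have := Nat.lt_of_mul_lt_mul_right upper
  have := Nat.lt_of_mul_lt_mul_right lower
  omega

theorem filter_range_product_range_add_eq (u v : ℕ) :
    ((range (u + 1) ×ˢ range (v + 1)).filter fun c => c.1 + c.2 = u + v) = {(u, v)} := by
  ext ⟨c₁, c₂⟩
  simp only [mem_filter, mem_product, mem_range, mem_singleton, Prod.mk.injEq]
  omega

theorem stmt_6_general (p : ℕ) (a b d r u v a0 b0 : ℕ)
    (hab : a + b = d * p + r) (hr : r ≤ p - 1)
    (ha : a = u * p + a0) (hb : b = v * p + b0) (ha0 : a0 ≤ p - 1)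
    (hb0r : b0 < r) :
    (∑ c ∈ (Finset.range (u + 1) ×ˢ Finset.range (v + 1)).filter
          (fun c => c.1 + c.2 = d),
        d.choose c.2 * (r - 1).choose (b - c.2 * p))
      = d.choose v * (r - 1).choose b0 ∧
    d.choose v * (r - 1).choose b0 ≠ 0 := by
  obtain rfl : u + v = d :=
    add_eq_of_add_digits_eq (ha ▸ hb ▸ hab) (by omega) hb0r (by omega)
  refine ⟨?_, ?_⟩
  · rw [filter_range_product_range_add_eq, sum_singleton, hb, Nat.add_sub_cancel_left]
  · exact Nat.mul_ne_zero (Nat.choose_pos (by omega)).ne' (Nat.choose_pos (by omega)).ne'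

/-- The count `N(μ; d)` for a hook `μ = (a, 1^b)` with `b_0 < r`:
`∑ C(d, c₂) C(r-1, b - c₂p) = C(d, v) C(r-1, b₀) ≠ 0`. -/
theorem stmt_6 (p : ℕ) (hp : p.Prime) (a b d r u v a0 b0 : ℕ)
    (hab : a + b = d * p + r) (hr1 : 1 ≤ r) (hr : r ≤ p - 1) (hd : 1 ≤ d)
    (ha : a = u * p + a0) (hb : b = v * p + b0) (ha0 : a0 ≤ p - 1) (hb0 : b0 ≤ p - 1)
    (hb0r : b0 < r) (ha1 : 1 ≤ a) :
    (∑ c ∈ (Finset.range (u + 1) ×ˢ Finset.range (v + 1)).filter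
          (fun c => c.1 + c.2 = d),
        d.choose c.2 * (r - 1).choose (b - c.2 * p))
      = d.choose v * (r - 1).choose b0 ∧
    d.choose v * (r - 1).choose b0 ≠ 0 :=
  stmt_6_general p a b d r u v a0 b0 hab hr ha hb ha0 hb0r
end

section
/- Let p be a prime and n = dp + r with 1 ≤ r ≤ p - 1, d ≥ 1. Write a = up + a_0 and b = vp + b_0 as before with a + b = n and r ≤ b_0. Then the sum ∑_{(c_1,c_2)} C(d-1, c_2) · C(p + r - 1, b - c_2 p), over pairs (c_1, c_2) of nonnegative integers with c_1 ≤ u, c_2 ≤ v, c_1 + c_2 = d - 1, equals C(d-1, v) · C(p + r - 1, b_0); moreover this equals zero if and only if v = d and b_0 = r (equivalently a = 0). -/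
/-!
Since `r ≤ b₀`, every summand with `c₂ < v` vanishes: then `b - c₂p ≥ p + b₀ > p + r - 1`. Only
`c₂ = v` can survive, giving `C(d-1, v) C(p+r-1, b₀)`; the carry analysis of `a₀ + b₀ < 2p` shows
`d - 1 ≤ u + v` (so this pair is admissible when `v ≤ d - 1`) and `v ≤ d`. As `b₀ ≤ p + r - 1`,
the product vanishes exactly when `v = d`, which forces `b = dp + r`, i.e. `a = 0`.
-/

open Finset

theorem Nat.lt_add_of_mul_le_mul_add {x y k p t : ℕ} (h : x * p ≤ y * p + t) (ht : t < k * p) :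
    x < y + k :=
  Nat.lt_of_mul_lt_mul_right (a := p) (by rw [add_mul]; omega)

theorem Nat.eq_and_eq_of_mul_add_eq_mul_add {x y s t p : ℕ} (hs : s < p) (ht : t < p)
    (h : x * p + s = y * p + t) : x = y ∧ s = t := by
  have hp : 0 < p := by omega
  obtain ⟨hx, hs'⟩ := (Nat.div_mod_unique (a := y * p + t) (d := x) hp).mpr ⟨by rw [← h]; ring, hs⟩
  obtain ⟨hy, ht'⟩ := (Nat.div_mod_unique (a := y * p + t) (d := y) hp).mpr ⟨by ring, ht⟩
  exact ⟨hx.symm.trans hy, hs'.symm.trans ht'⟩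

theorem Nat.choose_mul_add_sub_mul_eq_zero {n p v c b : ℕ} (hn : n < p + b) (hc : c < v) :
    n.choose (v * p + b - c * p) = 0 := by
  have : (c + 1) * p ≤ v * p := Nat.mul_le_mul_right p hc
  exact Nat.choose_eq_zero_of_lt (by rw [add_mul] at this; omega)

theorem sum_filter_add_eq_ite_of_eq_zero_of_lt {M : Type*} [AddCommMonoid M] {u v m : ℕ}
    {g : ℕ → M} (hg : ∀ c < v, g c = 0) (hm : m ≤ u + v) :
    ∑ c ∈ (range (u + 1) ×ˢ range (v + 1)).filter (fun c => c.1 + c.2 = m), g c.2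
      = if v ≤ m then g v else 0 := by
  split_ifs with hvm
  · refine sum_eq_single_of_mem (m - v, v) (by simp only [mem_filter, mem_product, mem_range]; omega)
      fun c hc hne => hg c.2 ?_
    simp only [mem_filter, mem_product, mem_range] at hc
    exact lt_of_le_of_ne (by omega) fun h => hne (Prod.ext (by omega) h)
  · refine sum_eq_zero fun c hc => hg c.2 ?_
    simp only [mem_filter, mem_product, mem_range] at hc
    omega

theorem stmt_7_general (p : ℕ) (a b d r u v a0 b0 : ℕ)
    (hab : a + b = d * p + r) (hr1 : 1 ≤ r) (hr : r ≤ p - 1) (hd : 1 ≤ d)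
    (ha : a = u * p + a0) (hb : b = v * p + b0) (ha0 : a0 ≤ p - 1) (hb0 : b0 ≤ p - 1)
    (hrb0 : r ≤ b0) :
    (∑ c ∈ (Finset.range (u + 1) ×ˢ Finset.range (v + 1)).filter
          (fun c => c.1 + c.2 = d - 1),
        (d - 1).choose c.2 * (p + r - 1).choose (b - c.2 * p))
      = (d - 1).choose v * (p + r - 1).choose b0 ∧
    ((d - 1).choose v * (p + r - 1).choose b0 = 0 ↔ (v = d ∧ b0 = r)) ∧
    ((v = d ∧ b0 = r) ↔ a = 0) := by
  have hvd : v < d + 1 :=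
    Nat.lt_add_of_mul_le_mul_add (p := p) (t := r) (k := 1) (by omega) (by omega)
  have hduv : d < u + v + 2 :=
    Nat.lt_add_of_mul_le_mul_add (p := p) (t := a0 + b0) (by rw [add_mul]; omega) (by omega)
  have hvanish : ∀ c < v, (d - 1).choose c * (p + r - 1).choose (b - c * p) = 0 := fun c hc => by
    rw [hb, Nat.choose_mul_add_sub_mul_eq_zero (by omega) hc, mul_zero]
  have hchoose_b0 : (p + r - 1).choose b0 ≠ 0 := (Nat.choose_pos (by omega)).ne'
  have hbr : v = d → b0 = r := fun h => by subst h; omega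
  refine ⟨?_, ?_, ?_⟩
  · rw [sum_filter_add_eq_ite_of_eq_zero_of_lt hvanish (by omega), hb, Nat.add_sub_cancel_left]
    split_ifs
    · rfl
    · rw [Nat.choose_eq_zero_of_lt (by omega), zero_mul]
  · rw [mul_eq_zero, or_iff_left hchoose_b0, Nat.choose_eq_zero_iff]
    exact ⟨fun h => ⟨by omega, hbr (by omega)⟩, fun h => by omega⟩
  · refine ⟨fun ⟨hv, hb0r⟩ => by subst hv hb0r; omega, fun ha_zero => ?_⟩
    exact Nat.eq_and_eq_of_mul_add_eq_mul_add (p := p) (by omega) (by omega) (by omega)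

/-- The count `N(μ; d-1)` for a hook `μ = (a, 1^b)` with `r ≤ b₀`:
`∑ C(d-1, c₂) C(p+r-1, b - c₂p) = C(d-1, v) C(p+r-1, b₀)`, which vanishes iff `v = d` and
`b₀ = r`, equivalently `a = 0`. -/
theorem stmt_7 (p : ℕ) (hp : p.Prime) (a b d r u v a0 b0 : ℕ)
    (hab : a + b = d * p + r) (hr1 : 1 ≤ r) (hr : r ≤ p - 1) (hd : 1 ≤ d)
    (ha : a = u * p + a0) (hb : b = v * p + b0) (ha0 : a0 ≤ p - 1) (hb0 : b0 ≤ p - 1)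
    (hrb0 : r ≤ b0) :
    (∑ c ∈ (Finset.range (u + 1) ×ˢ Finset.range (v + 1)).filter
          (fun c => c.1 + c.2 = d - 1),
        (d - 1).choose c.2 * (p + r - 1).choose (b - c.2 * p))
      = (d - 1).choose v * (p + r - 1).choose b0 ∧
    ((d - 1).choose v * (p + r - 1).choose b0 = 0 ↔ (v = d ∧ b0 = r)) ∧
    ((v = d ∧ b0 = r) ↔ a = 0) :=
  stmt_7_general p a b d r u v a0 b0 hab hr1 hr hd ha hb ha0 hb0 hrb0
end

section
/- Let p be a prime and μ = (a, 1^b) a hook partition of n = a + b with a ≥ 1. Writing a + b = dp + r with 0 ≤ r ≤ p - 1, and letting b_0 denote the p-residue of b, the p-weight of the hook (a, 1^b) is d if b_0 < r or r = 0, and is d - 1 if 1 ≤ r ≤ b_0. -/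
/-- Removing a skew `p`-hook, in terms of beta-sets (first-column hook lengths):
replace a beta-number `x ≥ p` by `x - p` when `x - p` is not already a beta-number. -/
def RemoveHook (p : ℕ) (B B' : Finset ℕ) : Prop :=
  ∃ x ∈ B, p ≤ x ∧ x - p ∉ B ∧ B' = insert (x - p) (B.erase x)

/-- `HasWeight p B w` : from the beta-set `B` one can remove `w` skew `p`-hooks to arrive
at a `p`-core (a beta-set admitting no further removals); `w` is the `p`-weight. -/
inductive HasWeight (p : ℕ) : Finset ℕ → ℕ → Prop
  | core (B : Finset ℕ) (h : ∀ B', ¬ RemoveHook p B B') : HasWeight p B 0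
  | step (B B' : Finset ℕ) (w : ℕ) (h : RemoveHook p B B') (hw : HasWeight p B' w) :
      HasWeight p B (w + 1)

lemma core_of (p : ℕ) (B : Finset ℕ) (h : ∀ x ∈ B, p ≤ x → x - p ∈ B) :
    HasWeight p B 0 := by
  refine HasWeight.core B ?_
  rintro B' ⟨x, hx, hpx, hnx, -⟩
  exact hnx (h x hx hpx)

lemma descend (p t : ℕ) (F : Finset ℕ) (hp : 1 ≤ p) (m : ℕ)
    (hF : ∀ j, j ≤ m → t + j * p ∉ F) (w : ℕ)
    (h : HasWeight p (insert t F) w) :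
    HasWeight p (insert (t + m * p) F) (w + m) := by
  induction m with
  | zero => simpa using h
  | succ m ih =>
    have prev := ih (fun j hj => hF j (by omega))
    have hmul : (m + 1) * p = m * p + p := by ring
    refine HasWeight.step _ (insert (t + m * p) F) (w + m) ?_ prev
    refine ⟨t + (m + 1) * p, by simp, by omega, ?_, ?_⟩
    · have h1 : t + (m + 1) * p - p = t + m * p := by omega
      rw [h1]
      simp only [Finset.mem_insert, not_or]
      exact ⟨by omega, hF m (by omega)⟩
    · rw [Finset.erase_insert (hF (m + 1) le_rfl)]
      congr 1
      omega

lemma cascade (p b t v w : ℕ) (hp : 1 ≤ p) (ht : b < t) (hv : v * p ≤ b)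
    (h : HasWeight p (insert t ((insert 0 (Finset.Icc 1 b)).erase (v * p))) w) :
    HasWeight p (insert t (Finset.Icc 1 b)) (w + v) := by
  have H : ∀ j, j ≤ v →
      HasWeight p (insert t ((insert 0 (Finset.Icc 1 b)).erase ((v - j) * p))) (w + j) := by
    intro j
    induction j with
    | zero => intro _; simpa using h
    | succ j ih =>
      intro hj
      have prev := ih (by omega)
      have hk : v - j = (v - (j + 1)) + 1 := by omega
      rw [hk] at prev
      set k := v - (j + 1) with hkdef
      have hkp : (k + 1) * p ≤ b := le_trans (Nat.mul_le_mul_right p (by omega)) hv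
      have hmul : (k + 1) * p = k * p + p := by ring
      refine HasWeight.step _ _ (w + j) ?_ prev
      refine ⟨(k + 1) * p, ?_, by omega, ?_, ?_⟩
      · simp only [Finset.mem_insert, Finset.mem_erase, Finset.mem_Icc]
        omega
      · simp only [Finset.mem_insert, Finset.mem_erase, Finset.mem_Icc]
        omega
      · ext x
        simp only [Finset.mem_insert, Finset.mem_erase, Finset.mem_Icc]
        omega
  have hfin := H v le_rfl
  rw [Nat.sub_self, Nat.zero_mul, Finset.erase_insert (by simp)] at hfin
  exact hfin

-- pipeline for r ≥ 1 : core → cascade (v moves) → descend (m moves)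
lemma hook_pos (p b t v m : ℕ) (hp : 1 ≤ p) (ht : b < t) (hv : v * p ≤ b)
    (hcore : ∀ x ∈ insert t ((insert 0 (Finset.Icc 1 b)).erase (v * p)), p ≤ x →
      x - p ∈ insert t ((insert 0 (Finset.Icc 1 b)).erase (v * p))) :
    HasWeight p (insert (t + m * p) (Finset.Icc 1 b)) (v + m) := by
  have h0 := core_of p _ hcore
  have h1 := cascade p b t v 0 hp ht hv h0
  have h2 := descend p t (Finset.Icc 1 b) hp m
    (fun j hj => by simp only [Finset.mem_Icc]; omega) (0 + v) h1
  simpa using h2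


/-- The `p`-weight of the hook partition `(a, 1^b)` (whose beta-set of length `b+1` is
`{a+b} ∪ {1, …, b}`) is `d` if `b₀ < r` or `r = 0`, and `d - 1` if `1 ≤ r ≤ b₀`,
where `a + b = dp + r`, `0 ≤ r ≤ p-1`, and `b₀ = b mod p`. -/
theorem stmt_13 (p : ℕ) (hp : p.Prime) (a b d r v b0 : ℕ) (ha : 1 ≤ a)
    (hn : a + b = d * p + r) (hr : r ≤ p - 1) (hb : b = v * p + b0) (hb0 : b0 ≤ p - 1) :
    HasWeight p (insert (a + b) (Finset.Icc 1 b))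
      (if b0 < r ∨ r = 0 then d else d - 1) := by
  have hp2 : 2 ≤ p := hp.two_le
  have hvp_le : v * p ≤ b := by omega
  have hb0p : b0 < p := by omega
  have hrp : r < p := by omega
  have hdp : (d + 1) * p = d * p + p := by ring
  by_cases hr0 : r = 0
  · -- weight is d
    subst hr0
    rw [if_pos (Or.inr rfl)]
    have hvd : v ≤ d := by
      by_contra hc
      have h1 : (d + 1) * p ≤ v * p := Nat.mul_le_mul_right p (by omega)
      omega
    -- core : {0, 1, ..., b}
    have hcore : HasWeight p (insert 0 (Finset.Icc 1 b)) 0 := by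
      refine core_of p _ ?_
      intro x hx hpx
      simp only [Finset.mem_insert, Finset.mem_Icc] at hx ⊢
      omega
    have hvmem : v * p ∈ insert 0 (Finset.Icc 1 b) := by
      simp only [Finset.mem_insert, Finset.mem_Icc]
      omega
    have hcore' : HasWeight p
        (insert (v * p) ((insert 0 (Finset.Icc 1 b)).erase (v * p))) 0 := by
      rw [Finset.insert_erase hvmem]; exact hcore
    have hF : ∀ j, j ≤ d - v →
        v * p + j * p ∉ (insert 0 (Finset.Icc 1 b)).erase (v * p) := by
      intro j hj
      have hj1 : j * p = 0 ∨ p ≤ j * p := by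
        rcases Nat.eq_zero_or_pos j with h | h
        · left; rw [h]; ring
        · right; exact Nat.le_mul_of_pos_left p h
      simp only [Finset.mem_erase, Finset.mem_insert, Finset.mem_Icc]
      omega
    have hdesc := descend p (v * p) _ (by omega) (d - v) hF 0 hcore'
    have hsum : v * p + (d - v) * p = d * p := by
      have h1 : v * p + (d - v) * p = (v + (d - v)) * p := by ring
      have h2 : v + (d - v) = d := by omega
      rw [h1, h2]
    have harg : v * p + (d - v) * p = a + b := by omega
    rw [harg] at hdesc
    have hcas := cascade p b (a + b) v (0 + (d - v)) (by omega) (by omega) hvp_le hdesc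
    have : 0 + (d - v) + v = d := by omega
    rwa [this] at hcas
  · -- r ≥ 1
    have hr1 : 1 ≤ r := by omega
    have hvp0 : v * p = 0 ∨ p ≤ v * p := by
      rcases Nat.eq_zero_or_pos v with h | h
      · left; rw [h]; ring
      · right; exact Nat.le_mul_of_pos_left p h
    by_cases hbr : b0 < r
    · -- weight d, big bead lands at r + v*p
      rw [if_pos (Or.inl hbr)]
      have hvd : v ≤ d := by
        by_contra hc
        have h1 : (d + 1) * p ≤ v * p := Nat.mul_le_mul_right p (by omega)
        omega
      have hcore : ∀ x ∈ insert (r + v * p) ((insert 0 (Finset.Icc 1 b)).erase (v * p)),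
          p ≤ x → x - p ∈ insert (r + v * p) ((insert 0 (Finset.Icc 1 b)).erase (v * p)) := by
        intro x hx hpx
        simp only [Finset.mem_insert, Finset.mem_erase, Finset.mem_Icc] at hx ⊢
        omega
      have h := hook_pos p b (r + v * p) v (d - v) (by omega) (by omega) hvp_le hcore
      have hsum : v * p + (d - v) * p = d * p := by
        have h1 : v * p + (d - v) * p = (v + (d - v)) * p := by ring
        have h2 : v + (d - v) = d := by omega
        rw [h1, h2]
      have harg : r + v * p + (d - v) * p = a + b := by omega
      rw [harg] at h
      have : v + (d - v) = d := by omega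
      rwa [this] at h
    · -- 1 ≤ r ≤ b0 : weight d - 1, big bead lands at r + v*p + p
      rw [if_neg (by omega)]
      have hvd : v + 1 ≤ d := by
        by_contra hc
        have h1 : d * p ≤ v * p := Nat.mul_le_mul_right p (by omega)
        omega
      have hcore : ∀ x ∈ insert (r + v * p + p) ((insert 0 (Finset.Icc 1 b)).erase (v * p)),
          p ≤ x → x - p ∈ insert (r + v * p + p) ((insert 0 (Finset.Icc 1 b)).erase (v * p)) := by
        intro x hx hpx
        simp only [Finset.mem_insert, Finset.mem_erase, Finset.mem_Icc] at hx ⊢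
        omega
      have h := hook_pos p b (r + v * p + p) v (d - (v + 1)) (by omega) (by omega) hvp_le hcore
      have hsum : (v + 1) * p + (d - (v + 1)) * p = d * p := by
        have h1 : (v + 1) * p + (d - (v + 1)) * p = ((v + 1) + (d - (v + 1))) * p := by ring
        have h2 : (v + 1) + (d - (v + 1)) = d := by omega
        rw [h1, h2]
      have hvp1 : (v + 1) * p = v * p + p := by ring
      have harg : r + v * p + p + (d - (v + 1)) * p = a + b := by omega
      rw [harg] at h
      have : v + (d - (v + 1)) = d - 1 := by omega
      rwa [this] at h
end

section
/- Let p be a prime and μ = (a, 1^b) a hook partition. In the Specht module S^μ over a field k, for 2 ≤ i (with I_i = {(i-1)p+1, …, ip} contained in {1, …, a+b}) and the p-cycle g_i on I_i, and t a standard μ-tableau: g_i · e_t = ± e_{t'} for some standard μ-tableau t', and g_i · e_t = e_t if and only if I_i is contained entirely in the first row of t or entirely in the first column of t. -/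
/-! Specht modules of hook shape `μ = (a, 1^b)`. A `μ`-tableau with entries in `{1, …, n}`
(modelled 0-based as `Fin n`) is a bijection from the cells `Fin a ⊕ Fin b` (first row,
and the rest of the first column) to `Fin n`. A `μ`-tabloid is determined by the ordered
tuple of entries in rows `2, …, b+1`, i.e. by an embedding `Fin b ↪ Fin n`; the Specht
module sits inside the permutation module `(Fin b ↪ Fin n) →₀ k`, spanned by the
polytabloids `e_t`. -/

/-- The entries of the first column of a hook tableau `t`, read downwards:
position `0` is the corner cell `(1,1)`, position `i+1` is the cell `(i+2, 1)`. -/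
def hookCol {a b n : ℕ} (ha : 1 ≤ a) (t : (Fin a ⊕ Fin b) ≃ Fin n)
    (i : Fin (b + 1)) : Fin n :=
  if h : (i : ℕ) = 0 then t (Sum.inl ⟨0, ha⟩)
  else t (Sum.inr ⟨(i : ℕ) - 1, by have := i.isLt; omega⟩)

lemma hookCol_injective {a b n : ℕ} (ha : 1 ≤ a) (t : (Fin a ⊕ Fin b) ≃ Fin n) :
    Function.Injective (hookCol ha t) := by
  intro x y hxy
  unfold hookCol at hxy
  split_ifs at hxy with h1 h2 h2
  · exact Fin.ext (by omega)
  · exact absurd (t.injective hxy) (by simp)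
  · exact absurd (t.injective hxy) (by simp)
  · have h3 := t.injective hxy
    simp only [Sum.inr.injEq, Fin.mk.injEq] at h3
    have hx := x.isLt; have hy := y.isLt
    exact Fin.ext (by omega)

/-- The tabloid obtained from the tableau `t` by permuting the first-column entries by
`σ` : the ordered tuple of entries below the first row. -/
def hookEmb {a b n : ℕ} (ha : 1 ≤ a) (t : (Fin a ⊕ Fin b) ≃ Fin n)
    (σ : Equiv.Perm (Fin (b + 1))) : Fin b ↪ Fin n :=
  ⟨fun i => hookCol ha t (σ i.succ), by
    intro x y h
    exact Fin.succ_injective _ (σ.injective (hookCol_injective ha t h))⟩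

/-- The polytabloid `e_t = ∑_{σ ∈ C_t} sgn(σ) {σ t}` associated to a hook tableau `t`. -/
noncomputable def polytabloid (k : Type) [Field k] {a b n : ℕ} (ha : 1 ≤ a)
    (t : (Fin a ⊕ Fin b) ≃ Fin n) : (Fin b ↪ Fin n) →₀ k :=
  ∑ σ : Equiv.Perm (Fin (b + 1)),
    ((Equiv.Perm.sign σ : ℤ) : k) • Finsupp.single (hookEmb ha t σ) (1 : k)

/-- A hook tableau is standard when the entries increase along the first row and down
the first column. -/
def IsStandard {a b n : ℕ} (ha : 1 ≤ a) (t : (Fin a ⊕ Fin b) ≃ Fin n) : Prop :=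
  StrictMono (fun j : Fin a => t (Sum.inl j)) ∧ StrictMono (hookCol ha t)

/-- The `p`-cycle on the block `I_i = {(i-1)p, …, ip - 1}` (0-based). -/
def gperm (p n i : ℕ) : Equiv.Perm (Fin n) :=
  ((List.finRange n).filter
    (fun x : Fin n => decide ((i - 1) * p ≤ (x : ℕ) ∧ (x : ℕ) < i * p))).formPerm

/-!
As `i ≥ 2`, the cycle `g = g_i` fixes the corner entry of a standard tableau `t`, and
`g e_t = e_{g t}`. Sorting the first row and the rest of the first column of `g t` gives a
standard `t'` with `e_{g t} = ± e_{t'}`, the sign being that of the column permutation.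

The support of `e_t` determines the set `C` of first-column entries of `t`, so `g e_t = e_t`
forces `g C ⊆ C`; as `g` is a single cycle on `I_i`, the block `I_i` then lies inside `C` or
misses it, i.e. lies in the first row. Conversely, if `g C ⊆ C`, then `g` permutes the first
column by some `τ` with `τ ^ p = 1`, whose sign is `1` in characteristic `p` (for odd `p`, `τ` is
even; for `p = 2`, `-1 = 1`).
-/

open Function Set

theorem Equiv.Perm.sign_cast_eq_one_of_pow_eq_one {p : ℕ} (hp : p.Prime) (k : Type*) [Ring k]
    [CharP k p] {α : Type*} [Fintype α] [DecidableEq α] {τ : Equiv.Perm α} (hτ : τ ^ p = 1) :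
    ((Equiv.Perm.sign τ : ℤ) : k) = 1 := by
  rcases hp.eq_two_or_odd with rfl | hodd
  · rcases Int.units_eq_one_or (Equiv.Perm.sign τ) with h | h <;> simp [h, CharTwo.neg_eq]
  · have h : Equiv.Perm.sign τ = 1 := by
      rw [← pow_one (Equiv.Perm.sign τ), ← hodd, ← Int.units_pow_eq_pow_mod_two, ← map_pow, hτ,
        map_one]
    simp [h]

theorem exists_perm_semiconj_of_mapsTo {ι α : Type*} [Finite ι] {f : ι → α}
    (hf : Injective f) {g : Equiv.Perm α} (hg : MapsTo g (range f) (range f)) :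
    ∃ τ : Equiv.Perm ι, Semiconj f τ g := by
  choose τ hτ using fun w => hg (mem_range_self w)
  have hτinj : Injective τ := fun w w' h => hf (g.injective (by rw [← hτ, ← hτ, h]))
  exact ⟨Equiv.ofBijective τ hτinj.bijective_of_finite, hτ⟩

theorem pow_eq_one_of_semiconj {ι α : Type*} {f : ι → α} (hf : Injective f)
    {τ : Equiv.Perm ι} {g : Equiv.Perm α} (h : Semiconj f τ g) {m : ℕ} (hg : g ^ m = 1) :
    τ ^ m = 1 := by
  ext w
  have := (h.iterate_right m).eq w
  rw [← Equiv.Perm.coe_pow, ← Equiv.Perm.coe_pow, hg] at this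
  exact hf this

theorem Equiv.Perm.ext_of_apply_succ {m : ℕ} {σ σ' : Equiv.Perm (Fin (m + 1))}
    (h : ∀ j : Fin m, σ j.succ = σ' j.succ) : σ = σ' := by
  refine Equiv.ext fun w => ?_
  cases w using Fin.cases with
  | zero =>
    obtain ⟨w, hw⟩ := σ'.surjective (σ 0)
    cases w using Fin.cases with
    | zero => exact hw.symm
    | succ j => exact absurd (σ.injective ((h j).trans hw)) (Fin.succ_ne_zero j)
  | succ j => exact h j

def blockList (p n i : ℕ) : List (Fin n) :=
  (List.finRange n).filter
    (fun x : Fin n => decide ((i - 1) * p ≤ (x : ℕ) ∧ (x : ℕ) < i * p))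

section Block

variable {p n i : ℕ}

theorem gperm_eq_formPerm : gperm p n i = (blockList p n i).formPerm := rfl

theorem nodup_blockList : (blockList p n i).Nodup := (List.nodup_finRange n).filter _

theorem mem_blockList {x : Fin n} :
    x ∈ blockList p n i ↔ (i - 1) * p ≤ (x : ℕ) ∧ (x : ℕ) < i * p := by
  simp [blockList]

theorem length_blockList (hi : 1 ≤ i) (hin : i * p ≤ n) : (blockList p n i).length = p := by
  have hval :
      (blockList p n i).toFinset.map Fin.valEmbedding = Finset.Ico ((i - 1) * p) (i * p) := by
    ext x
    simp only [Finset.mem_map, List.mem_toFinset, mem_blockList, Fin.valEmbedding_apply,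
      Finset.mem_Ico]
    exact ⟨fun ⟨y, hy, hyx⟩ => hyx ▸ hy, fun hx => ⟨⟨x, by omega⟩, hx, rfl⟩⟩
  have hip : (i - 1) * p + p = i * p := by
    rw [← Nat.succ_mul, Nat.succ_eq_add_one, Nat.sub_add_cancel hi]
  rw [← List.toFinset_card_of_nodup nodup_blockList, ← Finset.card_map Fin.valEmbedding, hval,
    Nat.card_Ico, ← hip, Nat.add_sub_cancel_left]

theorem gperm_apply_of_notMem {x : Fin n}
    (hx : ¬((i - 1) * p ≤ (x : ℕ) ∧ (x : ℕ) < i * p)) : gperm p n i x = x :=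
  List.formPerm_apply_of_notMem fun h => hx (mem_blockList.mp h)

theorem gperm_apply_mem {x : Fin n} (hx : (i - 1) * p ≤ (x : ℕ) ∧ (x : ℕ) < i * p) :
    (i - 1) * p ≤ (gperm p n i x : ℕ) ∧ (gperm p n i x : ℕ) < i * p :=
  mem_blockList.mp (List.formPerm_apply_mem_of_mem (mem_blockList.mpr hx))

theorem notMem_block_of_val_eq_zero (hi : 2 ≤ i) {x : Fin n} (hx : (x : ℕ) = 0) :
    ¬((i - 1) * p ≤ (x : ℕ) ∧ (x : ℕ) < i * p) := fun ⟨h1, h2⟩ => by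
  have hp : 0 < p := Nat.pos_of_mul_pos_left (hx ▸ h2)
  have : 0 < (i - 1) * p := Nat.mul_pos (by omega) hp
  omega

theorem gperm_pow_eq_one (hi : 1 ≤ i) (hin : i * p ≤ n) : gperm p n i ^ p = 1 := by
  have h := List.formPerm_pow_length_eq_one_of_nodup (blockList p n i) nodup_blockList
  rwa [length_blockList hi hin] at h

theorem exists_gperm_pow_apply_eq {x y : Fin n}
    (hx : (i - 1) * p ≤ (x : ℕ) ∧ (x : ℕ) < i * p)
    (hy : (i - 1) * p ≤ (y : ℕ) ∧ (y : ℕ) < i * p) :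
    ∃ m : ℕ, (gperm p n i ^ m) x = y := by
  obtain ⟨ix, hix, rfl⟩ := List.mem_iff_getElem.mp (mem_blockList.mpr hx)
  obtain ⟨iy, hiy, rfl⟩ := List.mem_iff_getElem.mp (mem_blockList.mpr hy)
  refine ⟨iy + (blockList p n i).length - ix, ?_⟩
  rw [gperm_eq_formPerm, List.formPerm_pow_apply_getElem _ nodup_blockList _ _ hix]
  refine getElem_congr_idx ?_
  rw [Nat.add_sub_of_le (by omega), Nat.add_mod_right, Nat.mod_eq_of_lt hiy]

theorem block_subset_of_mapsTo {S : Set (Fin n)} (hS : MapsTo (gperm p n i) S S) {x : Fin n}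
    (hx : (i - 1) * p ≤ (x : ℕ) ∧ (x : ℕ) < i * p) (hxS : x ∈ S) (y : Fin n)
    (hy : (i - 1) * p ≤ (y : ℕ) ∧ (y : ℕ) < i * p) : y ∈ S := by
  obtain ⟨m, rfl⟩ := exists_gperm_pow_apply_eq hx hy
  rw [Equiv.Perm.coe_pow]
  exact hS.iterate m hxS

end Block

section HookTableau

variable {a b n : ℕ} {ha : 1 ≤ a}

@[simp]
theorem hookCol_zero (t : (Fin a ⊕ Fin b) ≃ Fin n) : hookCol ha t 0 = t (Sum.inl ⟨0, ha⟩) :=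
  dif_pos rfl

@[simp]
theorem hookCol_succ (t : (Fin a ⊕ Fin b) ≃ Fin n) (j : Fin b) :
    hookCol ha t j.succ = t (Sum.inr j) := by
  simp [hookCol, Fin.val_succ]

theorem hookCol_trans (t : (Fin a ⊕ Fin b) ≃ Fin n) (g : Equiv.Perm (Fin n))
    (w : Fin (b + 1)) : hookCol ha (t.trans g) w = g (hookCol ha t w) := by
  unfold hookCol
  split_ifs <;> rfl

@[simp]
theorem hookEmb_apply (t : (Fin a ⊕ Fin b) ≃ Fin n) (σ : Equiv.Perm (Fin (b + 1)))
    (j : Fin b) : hookEmb ha t σ j = hookCol ha t (σ j.succ) := rfl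

theorem hookEmb_injective (t : (Fin a ⊕ Fin b) ≃ Fin n) : Injective (hookEmb ha t) :=
  fun _ _ h =>
    Equiv.Perm.ext_of_apply_succ fun j => hookCol_injective ha t (DFunLike.congr_fun h j)

theorem IsStandard.corner_val_eq_zero {t : (Fin a ⊕ Fin b) ≃ Fin n} (ht : IsStandard ha t) :
    (t (Sum.inl ⟨0, ha⟩) : ℕ) = 0 := by
  obtain ⟨c, hc⟩ := t.surjective ⟨0, (t (Sum.inl ⟨0, ha⟩)).pos⟩
  suffices t (Sum.inl ⟨0, ha⟩) ≤ t c by rw [hc] at this; exact Nat.le_zero.mp this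
  rcases c with j | j
  · exact ht.1.monotone (Fin.mk_le_of_le_val (Nat.zero_le _))
  · simpa using ht.2.monotone (Fin.zero_le j.succ)

theorem strictMono_hookCol {t : (Fin a ⊕ Fin b) ≃ Fin n}
    (h0 : ∀ j, t (Sum.inl ⟨0, ha⟩) < t (Sum.inr j)) (h : StrictMono fun j => t (Sum.inr j)) :
    StrictMono (hookCol ha t) := by
  intro u v huv
  cases v using Fin.cases with
  | zero => exact absurd huv (Fin.not_lt_zero u)
  | succ v =>
    cases u using Fin.cases with
    | zero => simpa using h0 v
    | succ u => simpa using h (Fin.succ_lt_succ_iff.mp huv)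

theorem exists_isStandard_hookCol_eq_comp (s : (Fin a ⊕ Fin b) ≃ Fin n)
    (h0 : (s (Sum.inl ⟨0, ha⟩) : ℕ) = 0) :
    ∃ t : (Fin a ⊕ Fin b) ≃ Fin n, IsStandard ha t ∧
      ∃ τ : Equiv.Perm (Fin (b + 1)), ∀ w, hookCol ha t w = hookCol ha s (τ w) := by
  set ρa := Tuple.sort fun j => s (Sum.inl j)
  set ρb := Tuple.sort fun j => s (Sum.inr j)
  set t := (Equiv.sumCongr ρa ρb).trans s
  have hrow : StrictMono fun j => t (Sum.inl j) :=
    (Tuple.monotone_sort _).strictMono_of_injective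
      ((s.injective.comp Sum.inl_injective).comp ρa.injective)
  have hcol : StrictMono fun j => t (Sum.inr j) :=
    (Tuple.monotone_sort _).strictMono_of_injective
      ((s.injective.comp Sum.inr_injective).comp ρb.injective)
  -- sorting the first row moves its minimal entry `0` back to the corner
  have hcorner : t (Sum.inl ⟨0, ha⟩) = s (Sum.inl ⟨0, ha⟩) := by
    have hle : t (Sum.inl ⟨0, ha⟩) ≤ t (Sum.inl (ρa.symm ⟨0, ha⟩)) :=
      hrow.monotone (Fin.mk_le_of_le_val (Nat.zero_le _))
    simp only [t, Equiv.trans_apply, Equiv.sumCongr_apply, Sum.map_inl,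
      Equiv.apply_symm_apply] at hle ⊢
    exact Fin.ext (by have := Fin.le_def.mp hle; omega)
  have hcorner_val : (t (Sum.inl ⟨0, ha⟩) : ℕ) = 0 := by rw [hcorner, h0]
  have hpos : ∀ j, t (Sum.inl ⟨0, ha⟩) < t (Sum.inr j) := fun j => by
    rw [Fin.lt_def, hcorner_val]
    exact Nat.pos_of_ne_zero fun hj =>
      Sum.inr_ne_inl (t.injective (Fin.ext (hj.trans hcorner_val.symm)))
  refine ⟨t, ⟨hrow, strictMono_hookCol hpos hcol⟩, Equiv.Perm.decomposeFin.symm (0, ρb),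
    fun w => ?_⟩
  cases w using Fin.cases with
  | zero => simpa using hcorner
  | succ j => simp [t]

variable (k : Type) [Field k]

theorem polytabloid_apply (t : (Fin a ⊕ Fin b) ≃ Fin n) (e : Fin b ↪ Fin n) :
    polytabloid k ha t e =
      ∑ σ : Equiv.Perm (Fin (b + 1)),
        if hookEmb ha t σ = e then ((Equiv.Perm.sign σ : ℤ) : k) else 0 := by
  simp [polytabloid, Finsupp.finsetSum_apply, Finsupp.single_apply]

theorem polytabloid_apply_hookEmb (t : (Fin a ⊕ Fin b) ≃ Fin n)
    (σ : Equiv.Perm (Fin (b + 1))) :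
    polytabloid k ha t (hookEmb ha t σ) = ((Equiv.Perm.sign σ : ℤ) : k) := by
  rw [polytabloid_apply, Finset.sum_eq_single σ
    (fun τ _ hτ => if_neg ((hookEmb_injective t).ne hτ)) (absurd (Finset.mem_univ σ)), if_pos rfl]

theorem exists_hookEmb_eq_of_polytabloid_apply_ne_zero {t : (Fin a ⊕ Fin b) ≃ Fin n}
    {e : Fin b ↪ Fin n} (he : polytabloid k ha t e ≠ 0) : ∃ σ, hookEmb ha t σ = e := by
  by_contra! h
  exact he (by rw [polytabloid_apply]; exact Finset.sum_eq_zero fun σ _ => if_neg (h σ))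

theorem range_hookCol_subset_of_polytabloid_eq {t₁ t₂ : (Fin a ⊕ Fin b) ≃ Fin n}
    (h : polytabloid k ha t₁ = polytabloid k ha t₂) (h0 : hookCol ha t₁ 0 = hookCol ha t₂ 0) :
    range (hookCol ha t₂) ⊆ range (hookCol ha t₁) := by
  rintro _ ⟨w, rfl⟩
  cases w using Fin.cases with
  | zero => exact ⟨0, h0⟩
  | succ j =>
    -- the tabloid `{t₂}` lies in the support of `e_{t₂} = e_{t₁}`
    have hsupp : polytabloid k ha t₁ (hookEmb ha t₂ 1) ≠ 0 := by
      rw [h, polytabloid_apply_hookEmb]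
      simp
    obtain ⟨σ, hσ⟩ := exists_hookEmb_eq_of_polytabloid_apply_ne_zero k hsupp
    exact ⟨σ j.succ, DFunLike.congr_fun hσ j⟩

theorem polytabloid_eq_sign_smul {t t' : (Fin a ⊕ Fin b) ≃ Fin n}
    (τ : Equiv.Perm (Fin (b + 1))) (h : ∀ w, hookCol ha t' w = hookCol ha t (τ w)) :
    polytabloid k ha t' = ((Equiv.Perm.sign τ : ℤ) : k) • polytabloid k ha t := by
  have hemb : ∀ σ, hookEmb ha t' σ = hookEmb ha t (τ * σ) := fun σ => by
    ext j
    simp [h]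
  have hsq : ((Equiv.Perm.sign τ : ℤ) : k) * ((Equiv.Perm.sign τ : ℤ) : k) = 1 := by
    rw [← Int.cast_mul, ← Units.val_mul, Int.units_mul_self, Units.val_one, Int.cast_one]
  unfold polytabloid
  rw [Finset.smul_sum]
  refine Fintype.sum_bijective (τ * ·) (Equiv.mulLeft τ).bijective _ _ fun σ => ?_
  rw [hemb, smul_smul, map_mul, Units.val_mul, Int.cast_mul, ← mul_assoc, hsq, one_mul]

theorem ofMulAction_polytabloid (t : (Fin a ⊕ Fin b) ≃ Fin n) (g : Equiv.Perm (Fin n)) :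
    Representation.ofMulAction k (Equiv.Perm (Fin n)) (Fin b ↪ Fin n) g
        (MonoidAlgebra.ofCoeff (polytabloid k ha t)) =
      MonoidAlgebra.ofCoeff (polytabloid k ha (t.trans g)) := by
  have hemb : ∀ σ, g • hookEmb ha t σ = hookEmb ha (t.trans g) σ := fun σ => by
    ext j
    simp [hookCol_trans]
  simp only [polytabloid, MonoidAlgebra.ofCoeff_sum, map_sum, MonoidAlgebra.ofCoeff_smul,
    MonoidAlgebra.ofCoeff_single, map_smul, Representation.ofMulAction_single, hemb]

theorem exists_isStandard_polytabloid_eq_or_eq_neg (s : (Fin a ⊕ Fin b) ≃ Fin n)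
    (h0 : (s (Sum.inl ⟨0, ha⟩) : ℕ) = 0) :
    ∃ t : (Fin a ⊕ Fin b) ≃ Fin n, IsStandard ha t ∧
      (polytabloid k ha s = polytabloid k ha t ∨ polytabloid k ha s = -polytabloid k ha t) := by
  obtain ⟨t, ht, τ, hτ⟩ := exists_isStandard_hookCol_eq_comp s h0
  refine ⟨t, ht, ?_⟩
  rw [polytabloid_eq_sign_smul k τ hτ]
  rcases Int.units_eq_one_or (Equiv.Perm.sign τ) with h | h <;> simp [h]

theorem polytabloid_trans_eq_self_iff {p : ℕ} (hp : p.Prime) [CharP k p]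
    {t : (Fin a ⊕ Fin b) ≃ Fin n} {g : Equiv.Perm (Fin n)} (hgp : g ^ p = 1)
    (hg0 : g (t (Sum.inl ⟨0, ha⟩)) = t (Sum.inl ⟨0, ha⟩)) :
    polytabloid k ha (t.trans g) = polytabloid k ha t ↔
      MapsTo g (range (hookCol ha t)) (range (hookCol ha t)) := by
  constructor
  · rintro h _ ⟨w, rfl⟩
    rw [← hookCol_trans]
    exact range_hookCol_subset_of_polytabloid_eq k h.symm (by simp [hg0]) (mem_range_self w)
  · intro hC
    obtain ⟨τ, hτ⟩ := exists_perm_semiconj_of_mapsTo (hookCol_injective ha t) hC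
    rw [polytabloid_eq_sign_smul k τ fun w => (hookCol_trans t g w).trans (hτ w).symm,
      Equiv.Perm.sign_cast_eq_one_of_pow_eq_one hp k
        (pow_eq_one_of_semiconj (hookCol_injective ha t) hτ hgp), one_smul]

end HookTableau

theorem mapsTo_gperm_range_hookCol_iff {a b n p i : ℕ} {ha : 1 ≤ a} (hi : 2 ≤ i)
    {t : (Fin a ⊕ Fin b) ≃ Fin n} (ht : IsStandard ha t) :
    MapsTo (gperm p n i) (range (hookCol ha t)) (range (hookCol ha t)) ↔
      (∀ x : Fin n, (i - 1) * p ≤ (x : ℕ) → (x : ℕ) < i * p → ∃ j : Fin a, t (Sum.inl j) = x) ∨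
        (∀ x : Fin n, (i - 1) * p ≤ (x : ℕ) → (x : ℕ) < i * p →
          ∃ j : Fin (b + 1), hookCol ha t j = x) := by
  constructor
  · refine fun hC => or_iff_not_imp_left.mpr fun hrow => ?_
    push Not at hrow
    obtain ⟨x, hx1, hx2, hxrow⟩ := hrow
    have hxC : x ∈ range (hookCol ha t) := by
      obtain ⟨j | j, rfl⟩ := t.surjective x
      · exact absurd rfl (hxrow j)
      · exact ⟨j.succ, hookCol_succ t j⟩
    exact fun y hy1 hy2 => block_subset_of_mapsTo hC ⟨hx1, hx2⟩ hxC y ⟨hy1, hy2⟩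
  · rintro (hrow | hcol) _ ⟨w, rfl⟩
    · refine ⟨w, (gperm_apply_of_notMem fun hw => ?_).symm⟩
      obtain ⟨j, hj⟩ := hrow _ hw.1 hw.2
      cases w using Fin.cases with
      | zero =>
        exact notMem_block_of_val_eq_zero hi ht.corner_val_eq_zero (by simpa using hw)
      | succ w => simp at hj
    · by_cases hw : (i - 1) * p ≤ (hookCol ha t w : ℕ) ∧ (hookCol ha t w : ℕ) < i * p
      · exact hcol _ (gperm_apply_mem hw).1 (gperm_apply_mem hw).2
      · exact ⟨w, (gperm_apply_of_notMem hw).symm⟩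

theorem stmt_15_general (p : ℕ) (hp : p.Prime) (k : Type) [Field k] [CharP k p]
    (a b n i : ℕ) (ha : 1 ≤ a) (hi : 2 ≤ i) (hin : i * p ≤ n)
    (t : (Fin a ⊕ Fin b) ≃ Fin n) (ht : IsStandard ha t) :
    ∃ t' : (Fin a ⊕ Fin b) ≃ Fin n, IsStandard ha t' ∧
      ((Representation.ofMulAction k (Equiv.Perm (Fin n)) (Fin b ↪ Fin n)) (gperm p n i)
          (MonoidAlgebra.ofCoeff (polytabloid k ha t)) = MonoidAlgebra.ofCoeff (polytabloid k ha t') ∨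
        (Representation.ofMulAction k (Equiv.Perm (Fin n)) (Fin b ↪ Fin n)) (gperm p n i)
          (MonoidAlgebra.ofCoeff (polytabloid k ha t)) = MonoidAlgebra.ofCoeff (- polytabloid k ha t')) ∧
      ((Representation.ofMulAction k (Equiv.Perm (Fin n)) (Fin b ↪ Fin n)) (gperm p n i)
          (MonoidAlgebra.ofCoeff (polytabloid k ha t)) = MonoidAlgebra.ofCoeff (polytabloid k ha t) ↔
        ((∀ x : Fin n, (i - 1) * p ≤ (x : ℕ) → (x : ℕ) < i * p →
            ∃ j : Fin a, t (Sum.inl j) = x) ∨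
          (∀ x : Fin n, (i - 1) * p ≤ (x : ℕ) → (x : ℕ) < i * p →
            ∃ j : Fin (b + 1), hookCol ha t j = x))) := by
  have hcorner : gperm p n i (t (Sum.inl ⟨0, ha⟩)) = t (Sum.inl ⟨0, ha⟩) :=
    gperm_apply_of_notMem (notMem_block_of_val_eq_zero hi ht.corner_val_eq_zero)
  obtain ⟨t', ht', hsign⟩ := exists_isStandard_polytabloid_eq_or_eq_neg k
    (t.trans (gperm p n i)) (by simpa [hcorner] using ht.corner_val_eq_zero)
  rw [ofMulAction_polytabloid]
  refine ⟨t', ht', hsign.imp (congrArg _) (congrArg _), ?_⟩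
  rw [MonoidAlgebra.ofCoeff_inj,
    polytabloid_trans_eq_self_iff k hp (gperm_pow_eq_one (by omega) hin) hcorner]
  exact mapsTo_gperm_range_hookCol_iff hi ht

/-- For `i ≥ 2`, the `p`-cycle `g_i` sends the polytabloid `e_t` of a standard hook
tableau to `± e_{t'}` for a standard tableau `t'`, with `g_i e_t = e_t` iff the block
`I_i` lies entirely in the first row or entirely in the first column of `t`. -/
theorem stmt_15 (p : ℕ) (hp : p.Prime) (k : Type) [Field k] [CharP k p]
    (a b n i : ℕ) (ha : 1 ≤ a) (hn : n = a + b) (hi : 2 ≤ i) (hin : i * p ≤ n)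
    (t : (Fin a ⊕ Fin b) ≃ Fin n) (ht : IsStandard ha t) :
    ∃ t' : (Fin a ⊕ Fin b) ≃ Fin n, IsStandard ha t' ∧
      ((Representation.ofMulAction k (Equiv.Perm (Fin n)) (Fin b ↪ Fin n)) (gperm p n i)
          (MonoidAlgebra.ofCoeff (polytabloid k ha t)) = MonoidAlgebra.ofCoeff (polytabloid k ha t') ∨
        (Representation.ofMulAction k (Equiv.Perm (Fin n)) (Fin b ↪ Fin n)) (gperm p n i)
          (MonoidAlgebra.ofCoeff (polytabloid k ha t)) = MonoidAlgebra.ofCoeff (- polytabloid k ha t')) ∧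
      ((Representation.ofMulAction k (Equiv.Perm (Fin n)) (Fin b ↪ Fin n)) (gperm p n i)
          (MonoidAlgebra.ofCoeff (polytabloid k ha t)) = MonoidAlgebra.ofCoeff (polytabloid k ha t) ↔
        ((∀ x : Fin n, (i - 1) * p ≤ (x : ℕ) → (x : ℕ) < i * p →
            ∃ j : Fin a, t (Sum.inl j) = x) ∨
          (∀ x : Fin n, (i - 1) * p ≤ (x : ℕ) → (x : ℕ) < i * p →
            ∃ j : Fin (b + 1), hookCol ha t j = x))) :=
  stmt_15_general p hp k a b n i ha hi hin t ht
end
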